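/- For every complex number z, sign(z) = (1/4) ∫₀^{2π} sign(Re(e^{-iθ} z)) e^{iθ} dθ. -/

import Mathlib

open Real

/-- sign function on ℂ: `z/|z|` for `z ≠ 0`, `0` at `0`. -/
noncomputable def signC (z : ℂ) : ℂ := z / (‖z‖ : ℂ)

lemma measurable_realSign : Measurable Real.sign := by
  unfold Real.sign
  exact Measurable.ite (measurableSet_lt measurable_id measurable_const) measurable_const
    (Measurable.ite (measurableSet_lt measurable_const measurable_id) measurable_const
      measurable_const)

lemma signC_real (r : ℝ) : signC (r : ℂ) = (Real.sign r : ℂ) := by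
  rcases lt_trichotomy r 0 with h | rfl | h
  · rw [Real.sign_of_neg h, signC, Complex.norm_real, Real.norm_eq_abs, abs_of_neg h]
    push_cast
    rw [div_eq_iff (by exact_mod_cast neg_ne_zero.mpr h.ne)]
    ring
  · simp [signC]
  · rw [Real.sign_of_pos h, signC, Complex.norm_real, Real.norm_eq_abs, abs_of_pos h]
    push_cast
    rw [div_eq_iff (by exact_mod_cast h.ne')]
    ring

lemma sign_mul_of_pos {c : ℝ} (hc : 0 < c) (x : ℝ) : Real.sign (c * x) = Real.sign x := by
  rcases lt_trichotomy x 0 with h | rfl | h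
  · rw [Real.sign_of_neg h, Real.sign_of_neg (mul_neg_of_pos_of_neg hc h)]
  · simp
  · rw [Real.sign_of_pos h, Real.sign_of_pos (mul_pos hc h)]

noncomputable def gfun (u : ℝ) : ℂ := (Real.sign (Real.cos u) : ℂ) * Complex.exp (Complex.I * u)

lemma gfun_periodic : Function.Periodic gfun (2 * π) := by
  intro u
  unfold gfun
  rw [Real.cos_add_two_pi]
  congr 1
  push_cast
  rw [mul_add, Complex.exp_add]
  have : Complex.exp (Complex.I * (2 * π)) = 1 := by
    rw [show Complex.I * (2 * π) = 2 * π * Complex.I by ring, Complex.exp_two_pi_mul_I]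
  rw [this, mul_one]

lemma gfun_intInt : ∀ a b : ℝ, IntervalIntegrable gfun MeasureTheory.volume a b := by
  intro a b
  have hmeas : Measurable gfun := by
    apply Measurable.mul
    · exact Complex.measurable_ofReal.comp (measurable_realSign.comp Real.measurable_cos)
    · exact (Complex.continuous_exp.comp (continuous_const.mul Complex.continuous_ofReal)).measurable
  have hbound : ∀ u : ℝ, ‖gfun u‖ ≤ ‖(1 : ℝ)‖ := by
    intro u
    unfold gfun
    rw [norm_mul, show Complex.I * (u:ℂ) = (u:ℂ) * Complex.I by ring, Complex.norm_exp_ofReal_mul_I]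
    rw [mul_one, Complex.norm_real, Real.norm_eq_abs, norm_one]
    rcases Real.sign_apply_eq (Real.cos u) with h | h | h <;> rw [h] <;> norm_num
  exact IntervalIntegrable.mono_fun (intervalIntegrable_const)
    hmeas.aestronglyMeasurable (MeasureTheory.ae_of_all _ hbound)

lemma ae_ne_const (c : ℝ) : ∀ᵐ x : ℝ, x ≠ c := by
  refine MeasureTheory.ae_iff.mpr ?_
  simp only [ne_eq, not_not, Set.setOf_eq_eq_singleton]
  exact MeasureTheory.measure_singleton (μ := MeasureTheory.volume) c

lemma gfun_integral : ∫ u in (0:ℝ)..(2*π), gfun u = 4 := by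
  have hpi := Real.pi_pos
  have h1 : ∫ u in (0:ℝ)..(π/2), gfun u
      = ∫ u in (0:ℝ)..(π/2), Complex.exp (Complex.I * u) := by
    apply intervalIntegral.integral_congr_ae
    filter_upwards [ae_ne_const (π/2)] with x hx hmem
    rw [Set.uIoc_of_le (by linarith)] at hmem
    have hc : 0 < Real.cos x :=
      Real.cos_pos_of_mem_Ioo ⟨by linarith [hmem.1], lt_of_le_of_ne hmem.2 hx⟩
    unfold gfun; rw [Real.sign_of_pos hc]; simp
  have h2 : ∫ u in (π/2)..(3*π/2), gfun u
      = ∫ u in (π/2)..(3*π/2), -Complex.exp (Complex.I * u) := by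
    apply intervalIntegral.integral_congr_ae
    filter_upwards [ae_ne_const (3*π/2)] with x hx hmem
    rw [Set.uIoc_of_le (by linarith)] at hmem
    have hx2 : x < 3*π/2 := lt_of_le_of_ne hmem.2 hx
    have hc : Real.cos x < 0 :=
      Real.cos_neg_of_pi_div_two_lt_of_lt hmem.1 (by linarith)
    unfold gfun; rw [Real.sign_of_neg hc]; push_cast; ring
  have h3 : ∫ u in (3*π/2)..(2*π), gfun u
      = ∫ u in (3*π/2)..(2*π), Complex.exp (Complex.I * u) := by
    apply intervalIntegral.integral_congr_ae
    filter_upwards [] with x hmem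
    rw [Set.uIoc_of_le (by linarith)] at hmem
    have hc : 0 < Real.cos x := by
      rw [← Real.cos_sub_two_pi]
      exact Real.cos_pos_of_mem_Ioo ⟨by linarith [hmem.1], by linarith [hmem.2]⟩
    unfold gfun; rw [Real.sign_of_pos hc]; simp
  rw [← intervalIntegral.integral_add_adjacent_intervals (gfun_intInt 0 (3*π/2))
      (gfun_intInt (3*π/2) (2*π)),
    ← intervalIntegral.integral_add_adjacent_intervals (gfun_intInt 0 (π/2))
      (gfun_intInt (π/2) (3*π/2)), h1, h2, h3]
  rw [intervalIntegral.integral_neg]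
  rw [integral_exp_mul_complex Complex.I_ne_zero,
    integral_exp_mul_complex Complex.I_ne_zero,
    integral_exp_mul_complex Complex.I_ne_zero]
  have e0 : Complex.exp (Complex.I * ((0:ℝ):ℂ)) = 1 := by norm_num
  have e1 : Complex.exp (Complex.I * ((π/2:ℝ):ℂ)) = Complex.I := by
    rw [show Complex.I * ((π/2:ℝ):ℂ) = ((π/2:ℝ):ℂ) * Complex.I by ring, Complex.exp_mul_I,
      ← Complex.ofReal_cos, ← Complex.ofReal_sin]
    norm_num
  have e2 : Complex.exp (Complex.I * ((3*π/2:ℝ):ℂ)) = -Complex.I := by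
    rw [show Complex.I * ((3*π/2:ℝ):ℂ) = ((3*π/2:ℝ):ℂ) * Complex.I by ring, Complex.exp_mul_I,
      ← Complex.ofReal_cos, ← Complex.ofReal_sin,
      show (3*π/2 : ℝ) = π + π/2 by ring, Real.cos_add, Real.sin_add]
    norm_num
  have e3 : Complex.exp (Complex.I * ((2*π:ℝ):ℂ)) = 1 := by
    rw [show Complex.I * ((2*π:ℝ):ℂ) = 2*(π:ℂ) * Complex.I by push_cast; ring,
      Complex.exp_two_pi_mul_I]
  push_cast at e0 e1 e2 e3 ⊢
  rw [e0, e1, e2, e3]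
  field_simp
  ring_nf

theorem sign_integral_formula (z : ℂ) :
    signC z = (1 / 4) *
      ∫ θ in (0:ℝ)..(2 * π),
        signC ((((Complex.exp (-(Complex.I * (θ:ℂ))) * z).re : ℝ) : ℂ)) *
          Complex.exp (Complex.I * (θ:ℂ)) := by
  by_cases hz : z = 0
  · subst hz
    simp [signC]
  · set r := ‖z‖ with hrdef
    set φ := Complex.arg z with hφdef
    have hr : 0 < r := norm_pos_iff.mpr hz
    have hzeq : ((r : ℝ) : ℂ) * Complex.exp ((φ:ℂ) * Complex.I) = z := by
      rw [hrdef]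
      exact Complex.norm_mul_exp_arg_mul_I z
    have hkey : ∀ θ : ℝ,
        signC ((((Complex.exp (-(Complex.I * (θ:ℂ))) * z).re : ℝ) : ℂ)) *
          Complex.exp (Complex.I * (θ:ℂ))
        = Complex.exp (Complex.I * (φ:ℂ)) * gfun (θ - φ) := by
      intro θ
      have hre : (Complex.exp (-(Complex.I * (θ:ℂ))) * z).re = r * Real.cos (φ - θ) := by
        conv_lhs => rw [← hzeq]
        rw [show Complex.exp (-(Complex.I * (θ:ℂ))) * (((r:ℝ):ℂ) * Complex.exp ((φ:ℂ) * Complex.I))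
            = ((r:ℝ):ℂ) * Complex.exp (((φ - θ : ℝ):ℂ) * Complex.I) by
          rw [mul_comm (Complex.exp _), mul_assoc, ← Complex.exp_add]; push_cast; ring_nf]
        rw [Complex.re_ofReal_mul, Complex.exp_ofReal_mul_I_re]
      rw [hre, signC_real, sign_mul_of_pos hr, show φ - θ = -(θ - φ) by ring, Real.cos_neg]
      unfold gfun
      rw [mul_comm (Complex.exp (Complex.I * (φ:ℂ))), mul_assoc, ← Complex.exp_add]
      congr 2
      push_cast
      ring
    rw [intervalIntegral.integral_congr (fun θ _ => hkey θ),
      intervalIntegral.integral_const_mul]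
    have hint : ∫ θ in (0:ℝ)..(2*π), gfun (θ - φ) = 4 := by
      rw [intervalIntegral.integral_comp_sub_right gfun φ]
      have h := gfun_periodic.intervalIntegral_add_eq (0 - φ) 0
      rw [show (0:ℝ) - φ + 2*π = 2*π - φ by ring, zero_add] at h
      rw [h, gfun_integral]
    rw [hint]
    have hsign : signC z = Complex.exp (Complex.I * (φ:ℂ)) := by
      rw [signC, ← hrdef]
      conv_lhs => rw [← hzeq]
      rw [mul_comm ((r:ℂ)), mul_div_assoc, div_self (by exact_mod_cast hr.ne'), mul_one,
        mul_comm]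
    rw [hsign]
    ring
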